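/- arXiv:1104.3900 — 2 statements merged into one kernel-verified Lean document; each statement's English description precedes it below -/
import Mathlib

section
/- Let n ≥ 2 and let a ∈ ℤ^n satisfy F_n(a) = 0. For each k, let b^(k) be the tuple obtained from a by replacing a_k with 2(Σ_{i≠k} a_i) + 1 − a_k (which again satisfies F_n = 0). Then: (1) for every k, the height of b^(k) differs from the height of a; and (2) there is at most one index k for which the height of b^(k) is smaller than the height of a. -/
open Finset

def F {n : ℕ} (x : Fin n → ℤ) : ℤ :=
  (∑ i, x i) ^ 2 - (∑ i, x i) - 4 * ∑ i, ∑ j, if i < j then x i * x j else 0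

/-- The `k`-th neighbor of a solution: replace `a k` by `2·(Σ_{i≠k} a i) + 1 − a k`. -/
def nbr {n : ℕ} (a : Fin n → ℤ) (k : Fin n) : Fin n → ℤ :=
  Function.update a k (2 * (∑ i ∈ univ.erase k, a i) + 1 - a k)

/-- The height of a tuple is `|1 + Σᵢ xᵢ|`. -/
def height {n : ℕ} (x : Fin n → ℤ) : ℤ := |1 + ∑ i, x i|

/-! A neighbor changes the coordinate sum `s` to `3s - 4aₖ + 1`, so its height is `|4aₖ - 3s - 2|`
against `|s + 1|` for `a`. Equality of the two heights would force `4aₖ = 2s + 1` or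
`4aₖ = 4s + 3`, impossible modulo 2 and 4. If two distinct neighbors `k ≠ l` both had smaller
height, adding `|4aₖ - 3s - 2| < |s + 1|` to its analogue for `l` gives
`|4(aₖ + aₗ)| > |4s + 2|`, hence `(aₖ + aₗ)² > s² + s`; but `F a = 0` says exactly
`2 Σ aᵢ² = s² + s`, while `(aₖ + aₗ)² ≤ 2 (aₖ² + aₗ²) ≤ 2 Σ aᵢ²`. -/

theorem sq_sum_eq_sum_sq_add_two_mul_sum_lt {ι R : Type*} [Fintype ι] [LinearOrder ι]
    [CommRing R] (x : ι → R) :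
    (∑ i, x i) ^ 2 = ∑ i, x i ^ 2 + 2 * ∑ i, ∑ j, if i < j then x i * x j else 0 := by
  have hsplit : ∀ i j, x i * x j = (if i < j then x i * x j else 0) +
      (if j < i then x j * x i else 0) + (if i = j then x i ^ 2 else 0) := by
    intro i j
    rcases lt_trichotomy i j with h | rfl | h
    · simp [h, h.ne, h.not_gt]
    · simp [sq]
    · simp [h, h.ne', h.not_gt, mul_comm]
  calc (∑ i, x i) ^ 2 = ∑ i, ∑ j, x i * x j := by rw [sq, sum_mul_sum]
    _ = (∑ i, ∑ j, if i < j then x i * x j else 0) +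
        (∑ i, ∑ j, if j < i then x j * x i else 0) +
        ∑ i, ∑ j, if i = j then x i ^ 2 else 0 := by
      simp only [← sum_add_distrib, ← hsplit]
    _ = _ := by
      rw [sum_comm (f := fun i j => if j < i then x j * x i else 0)]
      simp only [sum_ite_eq, mem_univ, if_true]
      ring

theorem two_mul_sum_sq_of_F_eq_zero {n : ℕ} {a : Fin n → ℤ} (ha : F a = 0) :
    2 * ∑ i, a i ^ 2 = (∑ i, a i) ^ 2 + ∑ i, a i := by
  have := sq_sum_eq_sum_sq_add_two_mul_sum_lt a
  unfold F at ha
  linarith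

theorem sum_nbr {n : ℕ} (a : Fin n → ℤ) (k : Fin n) :
    ∑ i, nbr a k i = 3 * ∑ i, a i - 4 * a k + 1 := by
  rw [nbr, sum_update_of_mem (mem_univ k), ← erase_eq, sum_erase_eq_sub (mem_univ k)]
  ring

theorem height_eq {n : ℕ} (a : Fin n → ℤ) : height a = |∑ i, a i + 1| := by
  rw [height, add_comm]

theorem height_nbr {n : ℕ} (a : Fin n → ℤ) (k : Fin n) :
    height (nbr a k) = |4 * a k - 3 * ∑ i, a i - 2| := by
  rw [height, sum_nbr, ← abs_neg]
  ring_nf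

theorem height_nbr_ne {n : ℕ} (a : Fin n → ℤ) (k : Fin n) : height (nbr a k) ≠ height a := by
  rw [height_nbr, height_eq, Ne, abs_eq_abs]
  omega

theorem sq_add_gt_of_abs_lt {s x y : ℤ} (hx : |4 * x - 3 * s - 2| < |s + 1|)
    (hy : |4 * y - 3 * s - 2| < |s + 1|) : s ^ 2 + s < (x + y) ^ 2 := by
  rcases le_or_gt 0 (s + 1) with hs | hs
  · rw [abs_of_nonneg hs, abs_lt] at hx hy
    have hxy : s + 1 ≤ x + y := by omega
    nlinarith
  · rw [abs_of_neg hs, abs_lt] at hx hy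
    have hxy : x + y ≤ s := by omega
    nlinarith

theorem eq_of_height_nbr_lt {n : ℕ} {a : Fin n → ℤ} (ha : F a = 0) {k l : Fin n}
    (hk : height (nbr a k) < height a) (hl : height (nbr a l) < height a) : k = l := by
  by_contra hkl
  rw [height_nbr, height_eq] at hk hl
  have hpair : a k ^ 2 + a l ^ 2 ≤ ∑ i, a i ^ 2 := by
    rw [← sum_pair (f := fun i => a i ^ 2) hkl]
    exact sum_le_sum_of_subset_of_nonneg (subset_univ _) fun i _ _ => sq_nonneg (a i)
  nlinarith [sq_add_gt_of_abs_lt hk hl, two_mul_sum_sq_of_F_eq_zero ha, sq_nonneg (a k - a l)]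

theorem stmt_5_general (n : ℕ) (a : Fin n → ℤ) (ha : F a = 0) :
    (∀ k, height (nbr a k) ≠ height a) ∧
      (∀ k l, height (nbr a k) < height a → height (nbr a l) < height a → k = l) :=
  ⟨height_nbr_ne a, fun _ _ => eq_of_height_nbr_lt ha⟩

/-- Any two neighbors of a solution have different heights from it, and at most one
neighbor has a smaller height. -/
theorem stmt_5 (n : ℕ) (hn : 2 ≤ n) (a : Fin n → ℤ) (ha : F a = 0) :
    (∀ k, height (nbr a k) ≠ height a) ∧
      (∀ k l, height (nbr a k) < height a → height (nbr a l) < height a → k = l) :=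
  stmt_5_general n a ha
end

section
/- Let c > 1 be a natural number that is a coordinate of some 3-color fair game (c ∈ C_3), and let m be the number of distinct prime factors of 2c+1 other than 3. Then the number of pairs (a, b) of integers with 0 ≤ a ≤ b ≤ c such that (a, b, c) is a 3-color fair game equals 2^(m−1); that is, up to permutation there are exactly 2^(m−1) fair games having c as their largest coordinate. -/
open Finset

def C3 : Set ℕ :=
  {c : ℕ | ∃ x : Fin 3 → ℤ, F x = 0 ∧ (∀ i, 0 ≤ x i) ∧ ∃ i, x i = (c : ℤ)}

/-! Writing `d = b - a`, the equation `F (a, b, c) = 0` reads `(2c + 1)(a + b) = d² + c² - c`,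
so a sorted game with largest coordinate `c` is determined by `d ∈ [0, c]`, and such a game
exists exactly when `(2d)² ≡ -3 (mod 2c + 1)`. As `d` runs over `[-c, c]`, `2d` runs over all
residues mod `2c + 1`, and `d ↦ -d` pairs off the solutions (`0` is none, as `2c + 1 ∤ 3`), so
the games are half as many as the square roots of `-3` mod `2c + 1`. That number is multiplicative
by the Chinese remainder theorem; modulo a power of a prime `p ≠ 2, 3` it is `2` since
`ZMod (p ^ k)` is local, and `3` divides `2c + 1` at most once (`-3` is not a square mod `9`),
contributing `1`. -/

theorem IsLocalRing.eq_or_eq_neg_of_sq_eq_sq {R : Type*} [CommRing R] [IsLocalRing R]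
    (h2 : IsUnit (2 : R)) {x y : R} (hx : IsUnit x) (h : y ^ 2 = x ^ 2) : y = x ∨ y = -x := by
  have hprod : (y - x) * (y + x) = 0 := by linear_combination h
  have hsum : IsUnit ((y + x) + (x - y)) := by convert h2.mul hx using 1; ring
  rcases IsLocalRing.isUnit_or_isUnit_of_isUnit_add hsum with hu | hu
  · exact .inl (sub_eq_zero.1 (hu.mul_left_eq_zero.1 hprod))
  · refine .inr (eq_neg_of_add_eq_zero_left (hu.mul_right_eq_zero.1 ?_))
    linear_combination -hprod

theorem IsLocalRing.natCard_sq_eq_sq {R : Type*} [CommRing R] [IsLocalRing R]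
    (h2 : IsUnit (2 : R)) {x : R} (hx : IsUnit x) : Nat.card {y : R // y ^ 2 = x ^ 2} = 2 := by
  have hne : x ≠ -x := fun h => hx.ne_zero (h2.mul_right_eq_zero.1 (by linear_combination h))
  have hroots : {y : R | y ^ 2 = x ^ 2} = {x, -x} := by
    ext y
    simp only [Set.mem_ofPred_eq, Set.mem_insert_iff, Set.mem_singleton_iff]
    refine ⟨eq_or_eq_neg_of_sq_eq_sq h2 hx, ?_⟩
    rintro (rfl | rfl) <;> ring
  change Nat.card {y : R | y ^ 2 = x ^ 2} = 2
  rw [Nat.card_coe_set_eq, hroots, Set.ncard_pair hne]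

theorem ZMod.isLocalRing_prime_pow {p k : ℕ} [Fact p.Prime] (hk : k ≠ 0) :
    IsLocalRing (ZMod (p ^ k)) :=
  haveI : Fact (1 < p ^ k) := ⟨Nat.one_lt_pow hk (Fact.out : p.Prime).one_lt⟩
  IsLocalRing.of_surjective' (PadicInt.toZModPow k) (ZMod.ringHom_surjective _)

theorem ZMod.isUnit_natCast_prime_pow {p q : ℕ} (hp : p.Prime) (hq : q.Prime) (hqp : q ≠ p)
    (k : ℕ) : IsUnit (q : ZMod (p ^ k)) :=
  (ZMod.isUnit_iff_coprime q (p ^ k)).2 (((Nat.coprime_primes hq hp).2 hqp).pow_right k)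

theorem ZMod.exists_sq_eq_of_dvd {m n : ℕ} (h : m ∣ n) {a : ℤ}
    (hroot : ∃ x : ZMod n, x ^ 2 = a) : ∃ y : ZMod m, y ^ 2 = a :=
  let ⟨x, hx⟩ := hroot
  ⟨ZMod.castHom h (ZMod m) x, by rw [← map_pow, hx, map_intCast]⟩

theorem ZMod.intCast_sq_eq_neg_three_iff {n : ℕ} (y : ℤ) :
    (y : ZMod n) ^ 2 = (-3 : ℤ) ↔ (n : ℤ) ∣ y ^ 2 + 3 := by
  rw [← Int.cast_pow, eq_comm, ZMod.intCast_eq_intCast_iff_dvd_sub, sub_neg_eq_add]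

noncomputable def numSqrtsMod (n : ℕ) (a : ℤ) : ℕ := Nat.card {x : ZMod n // x ^ 2 = a}

theorem numSqrtsMod_mul {m n : ℕ} (h : m.Coprime n) (a : ℤ) :
    numSqrtsMod (m * n) a = numSqrtsMod m a * numSqrtsMod n a := by
  let e := ZMod.chineseRemainder h
  rw [numSqrtsMod, numSqrtsMod, numSqrtsMod, ← Nat.card_prod]
  refine Nat.card_congr
    ((e.toEquiv.subtypeEquiv (q := fun y => y ^ 2 = (a : ZMod m × ZMod n)) fun x => ?_).trans
      ((Equiv.subtypeEquivRight fun y => ?_).trans Equiv.subtypeProdEquivProd))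
  · rw [← e.injective.eq_iff, map_pow, map_intCast]
    rfl
  · exact Prod.ext_iff

theorem numSqrtsMod_prime_pow {p k : ℕ} (hp : p.Prime) (hp2 : p ≠ 2) (hk : k ≠ 0) {a : ℤ}
    (ha : IsUnit (a : ZMod (p ^ k))) (hroot : ∃ x : ZMod (p ^ k), x ^ 2 = a) :
    numSqrtsMod (p ^ k) a = 2 := by
  have := Fact.mk hp
  have := ZMod.isLocalRing_prime_pow (p := p) hk
  obtain ⟨x, hx⟩ := hroot
  have h2 : IsUnit (2 : ZMod (p ^ k)) := by
    exact_mod_cast ZMod.isUnit_natCast_prime_pow hp Nat.prime_two (Ne.symm hp2) k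
  rw [numSqrtsMod, ← hx]
  exact IsLocalRing.natCard_sq_eq_sq h2 ((isUnit_pow_iff two_ne_zero).1 (hx ▸ ha))

theorem numSqrtsMod_three : numSqrtsMod 3 (-3) = 1 := by
  rw [numSqrtsMod, Nat.card_eq_fintype_card, Fintype.card_subtype]
  decide

theorem numSqrtsMod_neg_three {n : ℕ} (hn : Odd n) (hroot : ∃ x : ZMod n, x ^ 2 = (-3 : ℤ)) :
    numSqrtsMod n (-3) = 2 ^ (n.primeFactors \ {3}).card := by
  induction n using Nat.recOnPosPrimePosCoprime with
  | prime_pow p k hp hk =>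
    have hp2 : p ≠ 2 := by
      rintro rfl
      exact Nat.not_even_iff_odd.2 hn ((Nat.even_pow' hk.ne').2 even_two)
    rcases eq_or_ne p 3 with rfl | hp3
    · obtain rfl : k = 1 := by
        by_contra hk1
        obtain ⟨y, hy⟩ := ZMod.exists_sq_eq_of_dvd (pow_dvd_pow 3 (by omega : 2 ≤ k)) hroot
        revert y; decide
      simp [numSqrtsMod_three, Nat.prime_three.primeFactors]
    · have h3 : IsUnit ((-3 : ℤ) : ZMod (p ^ k)) := by
        push_cast
        exact_mod_cast (ZMod.isUnit_natCast_prime_pow hp Nat.prime_three hp3.symm k).neg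
      rw [numSqrtsMod_prime_pow hp hp2 hk.ne' h3 hroot, Nat.primeFactors_prime_pow hk.ne' hp,
        Finset.sdiff_eq_self_of_disjoint (by simpa using hp3), card_singleton, pow_one]
  | zero => exact absurd hn (by decide)
  | one =>
    rw [Nat.primeFactors_one, empty_sdiff, card_empty, pow_zero, numSqrtsMod,
      Nat.card_eq_fintype_card, Fintype.card_subtype]
    decide
  | coprime a b ha hb hab iha ihb =>
    rw [numSqrtsMod_mul hab,
      iha (Nat.Odd.of_mul_left hn) (ZMod.exists_sq_eq_of_dvd (dvd_mul_right a b) hroot),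
      ihb (Nat.Odd.of_mul_right hn) (ZMod.exists_sq_eq_of_dvd (dvd_mul_left b a) hroot),
      Nat.primeFactors_mul (by omega) (by omega), union_sdiff_distrib,
      card_union_of_disjoint (hab.disjoint_primeFactors.mono sdiff_subset sdiff_subset), pow_add]

theorem F_fin_three (x : Fin 3 → ℤ) :
    F x = (x 1 - x 0) ^ 2 + x 2 ^ 2 - x 2 - (2 * x 2 + 1) * (x 0 + x 1) := by
  simp only [F, Fin.sum_univ_three, Fin.isValue, not_lt_zero, ↓reduceIte, Fin.lt_one_iff,
    Nat.reduceAdd, zero_add, Fin.reduceLT, one_ne_zero, Fin.reduceEq, lt_self_iff_false, add_zero]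
  ring

theorem exists_sq_eq_neg_three_of_mem_C3 {c : ℕ} (hc : c ∈ C3) :
    ∃ x : ZMod (2 * c + 1), x ^ 2 = (-3 : ℤ) := by
  obtain ⟨x, hF, -, i, hi⟩ := hc
  rw [F_fin_three] at hF
  suffices ∃ y k : ℤ, y ^ 2 + 3 = (2 * c + 1) * k by
    obtain ⟨y, k, hyk⟩ := this
    exact ⟨y, (ZMod.intCast_sq_eq_neg_three_iff y).2 ⟨k, by push_cast; exact hyk⟩⟩
  fin_cases i <;> simp only [Fin.zero_eta, Fin.mk_one, Fin.reduceFinMk] at hi <;> rw [← hi]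
  · exact ⟨2 * (x 1 - x 2), 4 * (x 1 + x 2) - 2 * x 0 + 3, by linear_combination 4 * hF⟩
  · exact ⟨2 * (x 0 - x 2), 4 * (x 0 + x 2) - 2 * x 1 + 3, by linear_combination 4 * hF⟩
  · exact ⟨2 * (x 1 - x 0), 4 * (x 0 + x 1) - 2 * x 2 + 3, by linear_combination 4 * hF⟩

theorem F_vec_three (a b c : ℤ) :
    F ![a, b, c] = (b - a) ^ 2 + c ^ 2 - c - (2 * c + 1) * (a + b) := by
  simp [F_fin_three]

theorem exists_mul_two_mul_add_eq_of_dvd {c d : ℤ} (h : 2 * c + 1 ∣ (2 * d) ^ 2 + 3) :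
    ∃ a : ℤ, (2 * c + 1) * (2 * a + d) = d ^ 2 + c ^ 2 - c := by
  set N := d ^ 2 + c ^ 2 - c - (2 * c + 1) * d
  have hodd : 2 * c + 1 ∣ N := by
    have hc4 : IsCoprime (2 * c + 1) (4 : ℤ) := ⟨2 * c + 1, -(c ^ 2 + c), by ring⟩
    refine hc4.dvd_of_dvd_mul_left ?_
    have : 4 * N = (2 * d) ^ 2 + 3 + (2 * c + 1) * (2 * c - 3 - 4 * d) := by ring
    exact this ▸ dvd_add h (dvd_mul_right _ _)
  have heven : 2 ∣ N := by
    have : N = (d - c - 1) * (d - c - 1 + 1) - 2 * c := by ring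
    exact this ▸ dvd_sub (even_iff_two_dvd.1 (Int.even_mul_succ_self _)) (dvd_mul_right _ _)
  have hc2 : IsCoprime (2 * c + 1) (2 : ℤ) := ⟨1, -c, by ring⟩
  obtain ⟨a, ha⟩ := hc2.mul_dvd hodd heven
  exact ⟨a, by linear_combination -ha⟩

def sortedFairGames (c : ℤ) : Set (ℤ × ℤ) :=
  {p | 0 ≤ p.1 ∧ p.1 ≤ p.2 ∧ p.2 ≤ c ∧ F ![p.1, p.2, c] = 0}

theorem ncard_sortedFairGames (c : ℕ) :
    (sortedFairGames c).ncard =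
      {d : ℤ | 0 ≤ d ∧ d ≤ c ∧ (2 * (d : ZMod (2 * c + 1))) ^ 2 = (-3 : ℤ)}.ncard := by
  have hroot (d : ℤ) :
      (2 * (d : ZMod (2 * c + 1))) ^ 2 = (-3 : ℤ) ↔ 2 * (c : ℤ) + 1 ∣ (2 * d) ^ 2 + 3 := by
    have := ZMod.intCast_sq_eq_neg_three_iff (n := 2 * c + 1) (2 * d)
    push_cast at this
    exact this
  refine Set.ncard_congr (fun p _ => p.2 - p.1) ?_ ?_ ?_
  · rintro ⟨a, b⟩ ⟨ha, hab, hbc, hF⟩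
    rw [F_vec_three, sub_eq_zero] at hF
    exact ⟨by linarith, by linarith,
      (hroot _).2 ⟨4 * (a + b) - 2 * c + 3, by linear_combination 4 * hF⟩⟩
  · rintro ⟨a, b⟩ ⟨a', b'⟩ ⟨-, -, -, hF⟩ ⟨-, -, -, hF'⟩ hd
    rw [F_vec_three, sub_eq_zero] at hF hF'
    simp only at hd
    have hsum : a + b = a' + b' := by
      refine mul_left_cancel₀ (by positivity : (2 * (c : ℤ) + 1) ≠ 0) ?_
      rw [← hF, ← hF', hd]
    ext <;> simp only <;> linarith
  · rintro d ⟨hd0, hdc, hd⟩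
    obtain ⟨a, ha⟩ := exists_mul_two_mul_add_eq_of_dvd ((hroot d).1 hd)
    refine ⟨(a, a + d), ⟨?_, le_add_of_nonneg_right hd0, ?_, ?_⟩, by simp⟩
    -- `(2c + 1) * 2a = (c - d)² - (c + d) > -(2c + 1)`
    · nlinarith [sq_nonneg ((c : ℤ) - d)]
    · simp only
      nlinarith
    · rw [F_vec_three]
      linear_combination -ha

theorem ncard_symm_Icc_eq_two_mul_ncard (c : ℤ) {P : ℤ → Prop} (hP : ∀ e, P (-e) ↔ P e)
    (h0 : ¬ P 0) :
    {e : ℤ | -c ≤ e ∧ e ≤ c ∧ P e}.ncard = 2 * {e : ℤ | 0 ≤ e ∧ e ≤ c ∧ P e}.ncard := by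
  set A := {e : ℤ | 0 ≤ e ∧ e ≤ c ∧ P e}
  have hA : A.Finite := (Set.finite_Icc 0 c).subset fun e he => ⟨he.1, he.2.1⟩
  have hunion : {e : ℤ | -c ≤ e ∧ e ≤ c ∧ P e} = A ∪ -A := by
    ext e
    simp only [A, Set.mem_union, Set.mem_neg, Set.mem_ofPred_eq, hP]
    by_cases he : P e <;> simp only [he, and_true, and_false, or_false]
    omega
  have hdisj : Disjoint A (-A) := Set.disjoint_left.2 fun e he hne => by
    obtain rfl : e = 0 := le_antisymm (neg_nonneg.1 hne.1) he.1
    exact h0 he.2.2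
  rw [hunion, Set.ncard_union_eq hdisj hA hA.neg, Set.ncard_neg, two_mul]

theorem ncard_Icc_eq_natCard_zmod (c : ℕ) (P : ZMod (2 * c + 1) → Prop) :
    {e : ℤ | -c ≤ e ∧ e ≤ c ∧ P e}.ncard = Nat.card {x // P x} := by
  change _ = Nat.card {x | P x}
  rw [Nat.card_coe_set_eq, ← Set.InjOn.ncard_image (f := (Int.cast : ℤ → ZMod (2 * c + 1)))]
  · congr 1
    ext x
    simp only [Set.mem_image, Set.mem_ofPred_eq]
    refine ⟨?_, fun hx => ⟨x.valMinAbs, ?_, x.coe_valMinAbs⟩⟩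
    · rintro ⟨e, ⟨-, -, he⟩, rfl⟩
      exact he
    · have := x.valMinAbs_mem_Ioc
      simp only [Set.mem_Ioc] at this
      push_cast at this
      exact ⟨by omega, by omega, by rwa [x.coe_valMinAbs]⟩
  · rintro e ⟨he1, he2, -⟩ e' ⟨he1', he2', -⟩ h
    have := Int.eq_zero_of_abs_lt_dvd ((ZMod.intCast_eq_intCast_iff_dvd_sub _ _ _).1 h)
      (by rw [abs_lt]; push_cast; omega)
    omega

theorem two_mul_ncard_sortedFairGames {c : ℕ} (hc : 1 < c) :
    2 * (sortedFairGames c).ncard = numSqrtsMod (2 * c + 1) (-3) := by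
  have h2 : IsUnit (2 : ZMod (2 * c + 1)) := by
    exact_mod_cast (ZMod.isUnit_iff_coprime 2 _).2 (Nat.coprime_two_left.2 (odd_two_mul_add_one c))
  have h0 : ¬ (2 * ((0 : ℤ) : ZMod (2 * c + 1))) ^ 2 = ((-3 : ℤ) : ZMod (2 * c + 1)) := by
    intro h
    have h3 : ((3 : ℕ) : ZMod (2 * c + 1)) = 0 := by push_cast at h ⊢; linear_combination h
    rw [ZMod.natCast_eq_zero_iff] at h3
    have := Nat.le_of_dvd (by norm_num) h3
    omega
  have hsymm (e : ℤ) :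
      (2 * ((-e : ℤ) : ZMod (2 * c + 1))) ^ 2 = (2 * (e : ZMod (2 * c + 1))) ^ 2 := by
    push_cast
    ring
  rw [ncard_sortedFairGames, ← ncard_symm_Icc_eq_two_mul_ncard _ (fun e => by rw [hsymm]) h0,
    ncard_Icc_eq_natCard_zmod c (fun x => (2 * x) ^ 2 = ((-3 : ℤ) : ZMod (2 * c + 1))),
    numSqrtsMod]
  exact Nat.card_congr ((Units.mulLeft h2.unit).subtypeEquiv fun _ => Iff.rfl)

theorem eq_two_pow_sub_one_of_two_mul_eq {n m : ℕ} (h : 2 * n = 2 ^ m) : n = 2 ^ (m - 1) := by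
  cases m with
  | zero => omega
  | succ m =>
    rw [pow_succ] at h
    rw [Nat.add_sub_cancel]
    omega

/-- For `c ∈ C_3` with `c > 1`, the number of 3-color fair games having `c` as the
largest coordinate (counted up to permutation, i.e. as ascending triples
`(a, b, c)`) is `2^(m−1)`, where `m` is the number of distinct prime factors of
`2c+1` other than `3`. -/
theorem stmt_14 (c : ℕ) (hc1 : 1 < c) (hc : c ∈ C3) :
    {p : ℤ × ℤ | 0 ≤ p.1 ∧ p.1 ≤ p.2 ∧ p.2 ≤ (c : ℤ) ∧
        F ![p.1, p.2, (c : ℤ)] = 0}.ncard =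
      2 ^ (((2 * c + 1).primeFactors \ {3}).card - 1) := by
  have h := two_mul_ncard_sortedFairGames hc1
  rw [numSqrtsMod_neg_three (odd_two_mul_add_one c) (exists_sq_eq_neg_three_of_mem_C3 hc)] at h
  exact eq_two_pow_sub_one_of_two_mul_eq h
end
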